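/- arXiv:2005.08859 — 6 statements merged into one kernel-verified Lean document; each statement's English description precedes it below -/
import Mathlib

section
/- Let f : ℝ² → ℝ and g : ℝ² → ℝ be twice continuously differentiable, and define F(x,y,z) = g(f(x,y), z). Then at every point (x,y,z) ∈ ℝ³ one has ∂²F/∂y∂z · ∂F/∂x = ∂²F/∂x∂z · ∂F/∂y. -/
/-!
Both `F` and its `z`-derivative depend on `(x, y)` only through `u = f(x, y)`:
`F = ψ ∘ f` and `∂F/∂z = φ ∘ f` with `ψ(u) = g(u, z)` and `φ(u) = ∂g/∂z (u, z)`.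
By the chain rule every first derivative in `x` or `y` of these factors as
`ψ'(u) ∂f` or `φ'(u) ∂f`, and the identity becomes
`(φ' f_y)(ψ' f_x) = (φ' f_x)(ψ' f_y)`.
-/

section Slices

variable {f : ℝ → ℝ → ℝ}

theorem differentiable_fst_slice (hf : Differentiable ℝ (Function.uncurry f)) (y : ℝ) :
    Differentiable ℝ (fun x => f x y) :=
  hf.comp (differentiable_id.prodMk (differentiable_const y))

theorem differentiable_snd_slice (hf : Differentiable ℝ (Function.uncurry f)) (x : ℝ) :
    Differentiable ℝ (fun y => f x y) :=
  hf.comp ((differentiable_const x).prodMk differentiable_id)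

theorem deriv_snd_slice_eq_fderiv (hf : Differentiable ℝ (Function.uncurry f)) (x y : ℝ) :
    deriv (fun y' => f x y') y = fderiv ℝ (Function.uncurry f) (x, y) (0, 1) :=
  ((hf (x, y)).hasFDerivAt.comp_hasDerivAt y
    ((hasDerivAt_const y x).prodMk (hasDerivAt_id y))).deriv

theorem differentiable_deriv_snd_slice (hf : ContDiff ℝ 2 (Function.uncurry f)) (y : ℝ) :
    Differentiable ℝ (fun x => deriv (fun y' => f x y') y) := by
  have hD : Differentiable ℝ (fderiv ℝ (Function.uncurry f)) :=
    (hf.fderiv_right (m := 1) (by norm_num)).differentiable (by norm_num)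
  simp only [deriv_snd_slice_eq_fderiv (hf.differentiable (by norm_num))]
  exact (ContinuousLinearMap.apply ℝ ℝ ((0 : ℝ), (1 : ℝ))).differentiable.comp
    (hD.comp (differentiable_id.prodMk (differentiable_const y)))

end Slices

-- `deriv_comp` stated without `∘`, so that it rewrites goals in which the composition is β-reduced.
theorem deriv_comp_apply {h k : ℝ → ℝ} {t : ℝ} (hh : DifferentiableAt ℝ h (k t))
    (hk : DifferentiableAt ℝ k t) : deriv (fun s => h (k s)) t = deriv h (k t) * deriv k t :=
  deriv_comp t hh hk

/-- If `F(x,y,z) = g(f(x,y), z)` with `f, g` C², then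
`F_{yz} F_x = F_{xz} F_y` everywhere on ℝ³. -/
theorem stmt0 (f g : ℝ → ℝ → ℝ)
    (hf : ContDiff ℝ 2 (Function.uncurry f))
    (hg : ContDiff ℝ 2 (Function.uncurry g))
    (F : ℝ → ℝ → ℝ → ℝ)
    (hF : ∀ x y z, F x y z = g (f x y) z) :
    ∀ x y z : ℝ,
      deriv (fun y' => deriv (fun z' => F x y' z') z) y *
        deriv (fun x' => F x' y z) x =
      deriv (fun x' => deriv (fun z' => F x' y z') z) x *
        deriv (fun y' => F x y' z) y := by
  intro x y z
  have hf' : Differentiable ℝ (Function.uncurry f) := hf.differentiable (by norm_num)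
  have hφ : Differentiable ℝ (fun u => deriv (fun z' => g u z') z) :=
    differentiable_deriv_snd_slice hg z
  have hψ : Differentiable ℝ (fun u => g u z) :=
    differentiable_fst_slice (hg.differentiable (by norm_num)) z
  have hfx : DifferentiableAt ℝ (fun x' => f x' y) x := differentiable_fst_slice hf' y x
  have hfy : DifferentiableAt ℝ (fun y' => f x y') y := differentiable_snd_slice hf' x y
  simp only [hF]
  rw [deriv_comp_apply (h := fun u => deriv (fun z' => g u z') z) (hφ _) hfy,
    deriv_comp_apply (h := fun u => deriv (fun z' => g u z') z) (hφ _) hfx,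
    deriv_comp_apply (h := fun u => g u z) (hψ _) hfx,
    deriv_comp_apply (h := fun u => g u z) (hψ _) hfy]
  ring
end

section
/- The smooth function F(x,y,z) = xyz + x + y + z does not satisfy the identity F_{yz} F_x = F_{xz} F_y on all of ℝ³; consequently there exist no C² functions f, g : ℝ² → ℝ with F(x,y,z) = g(f(x,y), z) for all (x,y,z) ∈ ℝ³. -/
/-!
On the line `x + y = c` the superposition gives `g (f x y) 0 = F(x, y, 0) = c`, while
`g (f x y) 1 = (x + 1)(y + 1)` is not constant there unless `c = 1`. So for `c ≠ 1` the continuous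
function `f` maps that line onto a nondegenerate interval on which `g (·, 0) = c`. These intervals
are disjoint for distinct `c`, and each contains a rational, so `ℝ` would be countable.
-/

open Set Function

/-- The polynomial function `F(x,y,z) = xyz + x + y + z`. -/
noncomputable def F1 : ℝ → ℝ → ℝ → ℝ := fun x y z => x * y * z + x + y + z

lemma F1_deriv_x (x y z : ℝ) : deriv (fun x' => F1 x' y z) x = y * z + 1 := by
  have : (fun x' => F1 x' y z) = fun x' => (y * z + 1) * x' + (y + z) := by
    ext x'; simp only [F1]; ring
  simp [this]

lemma F1_deriv_y (x y z : ℝ) : deriv (fun y' => F1 x y' z) y = x * z + 1 := by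
  have : (fun y' => F1 x y' z) = fun y' => (x * z + 1) * y' + (x + z) := by
    ext y'; simp only [F1]; ring
  simp [this]

lemma F1_deriv_z (x y z : ℝ) : deriv (fun z' => F1 x y z') z = x * y + 1 := by
  have : (fun z' => F1 x y z') = fun z' => (x * y + 1) * z' + (x + y) := by
    ext z'; simp only [F1]; ring
  simp [this]

lemma F1_deriv_y_deriv_z (x y z : ℝ) :
    deriv (fun y' => deriv (fun z' => F1 x y' z') z) y = x := by
  simp [F1_deriv_z]

lemma F1_deriv_x_deriv_z (x y z : ℝ) :
    deriv (fun x' => deriv (fun z' => F1 x' y z') z) x = y := by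
  simp [F1_deriv_z]

lemma countable_setOf_uIcc_subset_preimage_singleton {β : Type*} (u : ℝ → β) :
    {c | ∃ a b : ℝ, a ≠ b ∧ uIcc a b ⊆ u ⁻¹' {c}}.Countable := by
  refine (countable_range fun q : ℚ => u q).mono ?_
  rintro c ⟨a, b, hab, hc⟩
  obtain ⟨q, hqa, hqb⟩ := exists_rat_btwn (min_lt_max.2 hab)
  exact ⟨q, hc ⟨hqa.le, hqb.le⟩⟩

section Superposition

variable {f g : ℝ → ℝ → ℝ} (h : ∀ x y z, F1 x y z = g (f x y) z)
include h

lemma apply_ne_of_F1_eq_superposition {c : ℝ} (hc : c ≠ 1) : f 0 c ≠ f 1 (c - 1) := by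
  intro hf
  have h₀ := h 0 c 1
  have h₁ := h 1 (c - 1) 1
  rw [hf, ← h₁] at h₀
  simp only [F1] at h₀
  exact hc (by linarith)

lemma uIcc_subset_preimage_of_F1_eq_superposition (hf : Continuous (uncurry f)) (c : ℝ) :
    uIcc (f 0 c) (f 1 (c - 1)) ⊆ (fun t => g t 0) ⁻¹' {c} := by
  have hline : Continuous fun s => f s (c - s) :=
    hf.comp (continuous_id.prodMk (continuous_const.sub continuous_id))
  have hivt := intermediate_value_uIcc (a := 0) (b := 1) hline.continuousOn
  rw [sub_zero] at hivt
  intro t ht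
  obtain ⟨s, -, rfl⟩ := hivt ht
  have hs := h s (c - s) 0
  simp only [F1] at hs
  simp only [mem_preimage, mem_singleton_iff, ← hs]
  ring

end Superposition

/-- `F(x,y,z) = xyz + x + y + z` does not satisfy
`F_{yz} F_x = F_{xz} F_y` on all of ℝ³, and consequently it is not a C²
superposition of the form `g(f(x,y), z)`. -/
theorem stmt1 :
    (¬ ∀ x y z : ℝ,
        deriv (fun y' => deriv (fun z' => F1 x y' z') z) y *
          deriv (fun x' => F1 x' y z) x =
        deriv (fun x' => deriv (fun z' => F1 x' y z') z) x *
          deriv (fun y' => F1 x y' z) y) ∧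
    ¬ ∃ f g : ℝ → ℝ → ℝ,
        ContDiff ℝ 2 (Function.uncurry f) ∧ ContDiff ℝ 2 (Function.uncurry g) ∧
        ∀ x y z : ℝ, F1 x y z = g (f x y) z := by
  refine ⟨fun h => ?_, ?_⟩
  · simpa [F1_deriv_x, F1_deriv_y, F1_deriv_y_deriv_z, F1_deriv_x_deriv_z] using h 1 0 0
  · rintro ⟨f, g, hf, -, h⟩
    have hlevels : ({1}ᶜ : Set ℝ) ⊆
        {c | ∃ a b : ℝ, a ≠ b ∧ uIcc a b ⊆ (fun t => g t 0) ⁻¹' {c}} := fun c hc =>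
      ⟨_, _, apply_ne_of_F1_eq_superposition h hc,
        uIcc_subset_preimage_of_F1_eq_superposition h hf.continuous c⟩
    exact not_countable_univ <| union_compl_self {(1 : ℝ)} ▸
      (countable_singleton 1).union
        ((countable_setOf_uIcc_subset_preimage_singleton _).mono hlevels)
end

section
/- Let F : U → ℝ be smooth on an open set U ⊆ ℝ³ containing a point p, with F_x(p) ≠ 0, and suppose F_{yz} F_x = F_{xz} F_y holds identically on U. Then there exist an open neighborhood V ⊆ U of p and smooth functions f : ℝ² → ℝ and g : ℝ² → ℝ (defined on suitable open sets) such that F(x,y,z) = g(f(x,y), z) for all (x,y,z) ∈ V. -/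
noncomputable def shearLE (α β : ℝ) (hα : α ≠ 0) : (ℝ × ℝ) ≃ₗ[ℝ] ℝ × ℝ where
  toFun v := (α * v.1 + β * v.2, v.2)
  map_add' u v := by simp [Prod.ext_iff]; ring
  map_smul' t v := by simp [Prod.ext_iff]; ring
  invFun w := ((w.1 - β * w.2) / α, w.2)
  left_inv v := by simp [Prod.ext_iff]; field_simp
  right_inv w := by simp [Prod.ext_iff]; field_simp; ring

noncomputable def shearCLE (α β : ℝ) (hα : α ≠ 0) : (ℝ × ℝ) ≃L[ℝ] ℝ × ℝ :=
  (shearLE α β hα).toContinuousLinearEquiv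

lemma shearCLE_coe_apply (α β : ℝ) (hα : α ≠ 0) (v : ℝ × ℝ) :
    (↑(shearCLE α β hα) : (ℝ × ℝ) →L[ℝ] ℝ × ℝ) v = (α * v.1 + β * v.2, v.2) := rfl

lemma clm_apply_dir (L : (ℝ × ℝ × ℝ) →L[ℝ] ℝ) (v : ℝ × ℝ × ℝ) :
    L v = v.1 * L (1,0,0) + v.2.1 * L (0,1,0) + v.2.2 * L (0,0,1) := by
  have hv : v = v.1 • ((1:ℝ),(0:ℝ),(0:ℝ)) + v.2.1 • ((0:ℝ),(1:ℝ),(0:ℝ))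
      + v.2.2 • ((0:ℝ),(0:ℝ),(1:ℝ)) := by
    simp [Prod.ext_iff]
  conv_lhs => rw [hv]
  simp only [map_add, map_smul, smul_eq_mul]

lemma mem_ball2 {p₁ p₂ x y ρ : ℝ} :
    ((x,y) : ℝ × ℝ) ∈ Metric.ball ((p₁,p₂) : ℝ × ℝ) ρ ↔
      x ∈ Metric.ball p₁ ρ ∧ y ∈ Metric.ball p₂ ρ := by
  rw [← ball_prod_same]
  exact Set.mem_prod

lemma mem_ball3 {p₁ p₂ p₃ x y z ρ : ℝ} :
    ((x,y,z) : ℝ × ℝ × ℝ) ∈ Metric.ball ((p₁,p₂,p₃) : ℝ × ℝ × ℝ) ρ ↔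
      x ∈ Metric.ball p₁ ρ ∧ y ∈ Metric.ball p₂ ρ ∧ z ∈ Metric.ball p₃ ρ := by
  rw [← ball_prod_same, ← ball_prod_same]
  simp [Set.mem_prod, and_assoc]

section helpers
variable {E : Type*} [NormedAddCommGroup E] [NormedSpace ℝ E]

lemma sliceX {G : ℝ × ℝ × ℝ → E} {L : (ℝ × ℝ × ℝ) →L[ℝ] E} {x y z : ℝ}
    (h : HasFDerivAt G L (x, y, z)) :
    HasDerivAt (fun x' => G (x', y, z)) (L (1, 0, 0)) x := by
  have hc : HasDerivAt (fun x' : ℝ => ((x', y, z) : ℝ × ℝ × ℝ)) ((1:ℝ), (0:ℝ), (0:ℝ)) x :=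
    (hasDerivAt_id x).prodMk ((hasDerivAt_const x y).prodMk (hasDerivAt_const x z))
  exact h.comp_hasDerivAt x hc

lemma sliceY {G : ℝ × ℝ × ℝ → E} {L : (ℝ × ℝ × ℝ) →L[ℝ] E} {x y z : ℝ}
    (h : HasFDerivAt G L (x, y, z)) :
    HasDerivAt (fun y' => G (x, y', z)) (L (0, 1, 0)) y := by
  have hc : HasDerivAt (fun y' : ℝ => ((x, y', z) : ℝ × ℝ × ℝ)) ((0:ℝ), (1:ℝ), (0:ℝ)) y :=
    (hasDerivAt_const y x).prodMk ((hasDerivAt_id y).prodMk (hasDerivAt_const y z))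
  exact h.comp_hasDerivAt y hc

lemma sliceZ {G : ℝ × ℝ × ℝ → E} {L : (ℝ × ℝ × ℝ) →L[ℝ] E} {x y z : ℝ}
    (h : HasFDerivAt G L (x, y, z)) :
    HasDerivAt (fun z' => G (x, y, z')) (L (0, 0, 1)) z := by
  have hc : HasDerivAt (fun z' : ℝ => ((x, y, z') : ℝ × ℝ × ℝ)) ((0:ℝ), (0:ℝ), (1:ℝ)) z :=
    (hasDerivAt_const z x).prodMk ((hasDerivAt_const z y).prodMk (hasDerivAt_id z))
  exact h.comp_hasDerivAt z hc

lemma slice2Y {G : ℝ × ℝ → E} {L : (ℝ × ℝ) →L[ℝ] E} {u y : ℝ}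
    (h : HasFDerivAt G L (u, y)) :
    HasDerivAt (fun y' => G (u, y')) (L (0, 1)) y := by
  have hc : HasDerivAt (fun y' : ℝ => ((u, y') : ℝ × ℝ)) ((0:ℝ), (1:ℝ)) y :=
    (hasDerivAt_const y u).prodMk (hasDerivAt_id y)
  exact h.comp_hasDerivAt y hc

lemma sliceCurveY {G : ℝ × ℝ × ℝ → E} {L : (ℝ × ℝ × ℝ) →L[ℝ] E} {φ : ℝ → ℝ} {k y z : ℝ}
    (h : HasFDerivAt G L (φ y, y, z)) (hφ : HasDerivAt φ k y) :
    HasDerivAt (fun y' => G (φ y', y', z)) (L (k, 1, 0)) y := by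
  have hc : HasDerivAt (fun y' : ℝ => ((φ y', y', z) : ℝ × ℝ × ℝ)) ((k:ℝ), (1:ℝ), (0:ℝ)) y :=
    hφ.prodMk ((hasDerivAt_id y).prodMk (hasDerivAt_const y z))
  exact h.comp_hasDerivAt y hc

lemma const_of_derivAt_zero {s : Set ℝ} (hs : Convex ℝ s) (ho : IsOpen s) {h : ℝ → ℝ}
    (hd : ∀ w ∈ s, HasDerivAt h 0 w) {z c : ℝ} (hz : z ∈ s) (hc : c ∈ s) : h z = h c := by
  refine hs.is_const_of_fderivWithin_eq_zero
    (fun w hw => (hd w hw).differentiableAt.differentiableWithinAt) (fun w hw => ?_) hz hc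
  rw [fderivWithin_of_isOpen ho hw]
  rw [(hd w hw).hasFDerivAt.fderiv]
  ext
  simp

end helpers

/-- local converse: a smooth `F` on an open `U ∋ p` with `F_x(p) ≠ 0`
satisfying `F_{yz} F_x = F_{xz} F_y` on `U` is locally of the form `g(f(x,y), z)`. -/
theorem stmt2 (U : Set (ℝ × ℝ × ℝ)) (hU : IsOpen U) (p : ℝ × ℝ × ℝ) (hp : p ∈ U)
    (F : ℝ → ℝ → ℝ → ℝ)
    (hF : ContDiffOn ℝ (⊤ : ℕ∞) (fun q : ℝ × ℝ × ℝ => F q.1 q.2.1 q.2.2) U)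
    (hFx : deriv (fun x' => F x' p.2.1 p.2.2) p.1 ≠ 0)
    (hpde : ∀ q ∈ U,
      deriv (fun y' => deriv (fun z' => F q.1 y' z') q.2.2) q.2.1 *
        deriv (fun x' => F x' q.2.1 q.2.2) q.1 =
      deriv (fun x' => deriv (fun z' => F x' q.2.1 z') q.2.2) q.1 *
        deriv (fun y' => F q.1 y' q.2.2) q.2.1) :
    ∃ V : Set (ℝ × ℝ × ℝ), IsOpen V ∧ p ∈ V ∧ V ⊆ U ∧
      ∃ (W₁ W₂ : Set (ℝ × ℝ)) (f g : ℝ → ℝ → ℝ),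
        IsOpen W₁ ∧ IsOpen W₂ ∧
        ContDiffOn ℝ (⊤ : ℕ∞) (Function.uncurry f) W₁ ∧
        ContDiffOn ℝ (⊤ : ℕ∞) (Function.uncurry g) W₂ ∧
        ∀ q ∈ V, (q.1, q.2.1) ∈ W₁ ∧ (f q.1 q.2.1, q.2.2) ∈ W₂ ∧
          F q.1 q.2.1 q.2.2 = g (f q.1 q.2.1) q.2.2 := by
  obtain ⟨a, b, c⟩ := p
  dsimp only at hFx hp
  set Ft : ℝ × ℝ × ℝ → ℝ := fun q => F q.1 q.2.1 q.2.2 with hFtdef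
  set A : (ℝ × ℝ × ℝ) → ((ℝ × ℝ × ℝ) →L[ℝ] ℝ) := fderiv ℝ Ft with hAdef
  set B : (ℝ × ℝ × ℝ) → ((ℝ × ℝ × ℝ) →L[ℝ] ((ℝ × ℝ × ℝ) →L[ℝ] ℝ)) := fderiv ℝ A with hBdef
  have hFtq : ∀ q ∈ U, HasFDerivAt Ft (A q) q := fun q hq =>
    ((hF.contDiffAt (hU.mem_nhds hq)).differentiableAt (by simp)).hasFDerivAt
  have hA : ContDiffOn ℝ (⊤ : ℕ∞) A U := hF.fderiv_of_isOpen hU (by simp)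
  have hAq : ∀ q ∈ U, HasFDerivAt A (B q) q := fun q hq =>
    ((hA.contDiffAt (hU.mem_nhds hq)).differentiableAt (by simp)).hasFDerivAt
  -- the nonzero partial at p
  have hα0 : A (a,b,c) (1,0,0) ≠ 0 := by
    have h1 : deriv (fun x' => F x' b c) a = A (a,b,c) (1,0,0) :=
      HasDerivAt.deriv (sliceX (hFtq (a,b,c) hp))
    exact h1 ▸ hFx
  -- the PDE in directional form
  have hpde' : ∀ q ∈ U, B q (0,0,1) (0,1,0) * A q (1,0,0) = B q (0,0,1) (1,0,0) * A q (0,1,0) := by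
    rintro ⟨x, y, z⟩ hq
    have hsymm : IsSymmSndFDerivAt ℝ Ft (x,y,z) :=
      (hF.contDiffAt (hU.mem_nhds hq)).isSymmSndFDerivAt (by rw [minSmoothness_of_isRCLikeNormedField]; exact WithTop.coe_le_coe.2 (le_top : (2 : ℕ∞) ≤ ⊤))
    have h1 : deriv (fun y' => deriv (fun z' => F x y' z') z) y = B (x,y,z) (0,1,0) (0,0,1) := by
      have hev : (fun y' => deriv (fun z' => F x y' z') z) =ᶠ[nhds y]
          (fun y' => A (x,y',z) (0,0,1)) := by
        have hcont : Continuous (fun y' : ℝ => ((x,y',z) : ℝ × ℝ × ℝ)) :=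
          continuous_const.prodMk (continuous_id.prodMk continuous_const)
        filter_upwards [hcont.continuousAt.preimage_mem_nhds (hU.mem_nhds hq)] with y' hy'
        exact HasDerivAt.deriv (sliceZ (hFtq _ hy'))
      rw [hev.deriv_eq]
      have h2 : HasDerivAt (fun y' => A (x,y',z)) (B (x,y,z) (0,1,0)) y := sliceY (hAq _ hq)
      have h2a : HasDerivAt (fun y' => A (x,y',z) (0,0,1)) (B (x,y,z) (0,1,0) (0,0,1)) y := by
        simpa using h2.clm_apply (hasDerivAt_const y (((0:ℝ),(0:ℝ),(1:ℝ)) : ℝ × ℝ × ℝ))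
      exact h2a.deriv
    have h2 : deriv (fun x' => deriv (fun z' => F x' y z') z) x = B (x,y,z) (1,0,0) (0,0,1) := by
      have hev : (fun x' => deriv (fun z' => F x' y z') z) =ᶠ[nhds x]
          (fun x' => A (x',y,z) (0,0,1)) := by
        have hcont : Continuous (fun x' : ℝ => ((x',y,z) : ℝ × ℝ × ℝ)) :=
          continuous_id.prodMk (continuous_const.prodMk continuous_const)
        filter_upwards [hcont.continuousAt.preimage_mem_nhds (hU.mem_nhds hq)] with x' hx'
        exact HasDerivAt.deriv (sliceZ (hFtq _ hx'))
      rw [hev.deriv_eq]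
      have h2 : HasDerivAt (fun x' => A (x',y,z)) (B (x,y,z) (1,0,0)) x := sliceX (hAq _ hq)
      have h2a : HasDerivAt (fun x' => A (x',y,z) (0,0,1)) (B (x,y,z) (1,0,0) (0,0,1)) x := by
        simpa using h2.clm_apply (hasDerivAt_const x (((0:ℝ),(0:ℝ),(1:ℝ)) : ℝ × ℝ × ℝ))
      exact h2a.deriv
    have h3 : deriv (fun x' => F x' y z) x = A (x,y,z) (1,0,0) :=
      HasDerivAt.deriv (sliceX (hFtq _ hq))
    have h4 : deriv (fun y' => F x y' z) y = A (x,y,z) (0,1,0) :=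
      HasDerivAt.deriv (sliceY (hFtq _ hq))
    have hmain := hpde (x,y,z) hq
    dsimp only at hmain
    rw [h1, h2, h3, h4] at hmain
    have hs1 : B (x,y,z) (0,1,0) (0,0,1) = B (x,y,z) (0,0,1) (0,1,0) := hsymm _ _
    have hs2 : B (x,y,z) (1,0,0) (0,0,1) = B (x,y,z) (0,0,1) (1,0,0) := hsymm _ _
    rw [hs1, hs2] at hmain
    exact hmain
  -- openness of the good set
  have hAc : ContinuousOn (fun q => A q ((1:ℝ),(0:ℝ),(0:ℝ))) U := by
    have := (hA.continuousOn (𝕜 := ℝ))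
    exact this.clm_apply continuousOn_const
  have hU' : IsOpen (U ∩ (fun q => A q ((1:ℝ),(0:ℝ),(0:ℝ))) ⁻¹' ({0}ᶜ)) :=
    hAc.isOpen_inter_preimage hU isOpen_compl_singleton
  obtain ⟨r, hr0, hrsub⟩ : ∃ r > 0, Metric.ball ((a,b,c) : ℝ × ℝ × ℝ) r ⊆
      U ∩ (fun q => A q ((1:ℝ),(0:ℝ),(0:ℝ))) ⁻¹' ({0}ᶜ) :=
    Metric.isOpen_iff.1 hU' _ ⟨hp, hα0⟩
  have hballmem : ∀ x y z : ℝ, ((x,y,z) : ℝ × ℝ × ℝ) ∈ Metric.ball ((a,b,c) : ℝ × ℝ × ℝ) r ↔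
      x ∈ Metric.ball a r ∧ y ∈ Metric.ball b r ∧ z ∈ Metric.ball c r := by
    intro x y z
    rw [← ball_prod_same, ← ball_prod_same]
    simp [Set.mem_prod, and_assoc]
  have hrU : ∀ q ∈ Metric.ball ((a,b,c) : ℝ × ℝ × ℝ) r, q ∈ U := fun q hq => (hrsub hq).1
  have hrne : ∀ q ∈ Metric.ball ((a,b,c) : ℝ × ℝ × ℝ) r, A q (1,0,0) ≠ 0 := fun q hq =>
    (hrsub hq).2
  -- z-independence of the ratio A e2 / A e1 on the ball
  have hratio : ∀ x y z : ℝ, x ∈ Metric.ball a r → y ∈ Metric.ball b r → z ∈ Metric.ball c r →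
      A (x,y,z) (0,1,0) * A (x,y,c) (1,0,0) = A (x,y,c) (0,1,0) * A (x,y,z) (1,0,0) := by
    intro x y z hx hy hz
    have hcball : c ∈ Metric.ball c r := Metric.mem_ball_self hr0
    have key : ∀ z' ∈ Metric.ball c r,
        HasDerivAt (fun z'' => A (x,y,z'') (0,1,0) / A (x,y,z'') (1,0,0)) 0 z' := by
      intro z' hz'
      have hqb : ((x,y,z') : ℝ × ℝ × ℝ) ∈ Metric.ball ((a,b,c) : ℝ × ℝ × ℝ) r :=
        (hballmem x y z').2 ⟨hx, hy, hz'⟩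
      have hqU : ((x,y,z') : ℝ × ℝ × ℝ) ∈ U := hrU _ hqb
      have hne : A (x,y,z') (1,0,0) ≠ 0 := hrne _ hqb
      have h2 : HasDerivAt (fun z'' => A (x,y,z'')) (B (x,y,z') (0,0,1)) z' :=
        sliceZ (hAq _ hqU)
      have h2a : HasDerivAt (fun z'' => A (x,y,z'') (0,1,0)) (B (x,y,z') (0,0,1) (0,1,0)) z' := by
        simpa using h2.clm_apply (hasDerivAt_const z' (((0:ℝ),(1:ℝ),(0:ℝ)) : ℝ × ℝ × ℝ))
      have h2b : HasDerivAt (fun z'' => A (x,y,z'') (1,0,0)) (B (x,y,z') (0,0,1) (1,0,0)) z' := by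
        simpa using h2.clm_apply (hasDerivAt_const z' (((1:ℝ),(0:ℝ),(0:ℝ)) : ℝ × ℝ × ℝ))
      have hd := h2a.div h2b hne
      have heq : (B (x,y,z') (0,0,1) (0,1,0) * A (x,y,z') (1,0,0) -
          A (x,y,z') (0,1,0) * B (x,y,z') (0,0,1) (1,0,0)) / A (x,y,z') (1,0,0) ^ 2 = 0 := by
        rw [div_eq_zero_iff]
        left
        linear_combination hpde' (x,y,z') hqU
      rw [heq] at hd
      exact hd
    have hconst := const_of_derivAt_zero (convex_ball c r) Metric.isOpen_ball key hz hcball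
    have hzne : A (x,y,z) (1,0,0) ≠ 0 := hrne _ ((hballmem x y z).2 ⟨hx, hy, hz⟩)
    have hcne : A (x,y,c) (1,0,0) ≠ 0 := hrne _ ((hballmem x y c).2 ⟨hx, hy, hcball⟩)
    rwa [div_eq_div_iff hzne hcne] at hconst
  -- the map Φ(x,y) = (F(x,y,c), y) and its local inverse
  set j : ℝ × ℝ → ℝ × ℝ × ℝ := fun v => (v.1, v.2, c) with hjdef
  have hj : ContDiff ℝ (⊤ : ℕ∞) j := contDiff_fst.prodMk (contDiff_snd.prodMk contDiff_const)
  set Φ : ℝ × ℝ → ℝ × ℝ := fun v => (Ft (j v), v.2) with hΦdef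
  have hΦat : ∀ v : ℝ × ℝ, j v ∈ U → ContDiffAt ℝ (⊤ : ℕ∞) Φ v := fun v hv =>
    ((hF.contDiffAt (hU.mem_nhds hv)).comp v hj.contDiffAt).prodMk contDiffAt_snd
  have hΦD : ∀ v : ℝ × ℝ, j v ∈ U → ∀ hne : A (j v) (1,0,0) ≠ 0,
      HasFDerivAt Φ (↑(shearCLE (A (j v) (1,0,0)) (A (j v) (0,1,0)) hne) :
        (ℝ × ℝ) →L[ℝ] ℝ × ℝ) v := by
    intro v hv hne
    have hjD : HasFDerivAt j
        ((ContinuousLinearMap.fst ℝ ℝ ℝ).prod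
          ((ContinuousLinearMap.snd ℝ ℝ ℝ).prod 0)) v :=
      hasFDerivAt_fst.prodMk (hasFDerivAt_snd.prodMk (hasFDerivAt_const c v))
    have h1 : HasFDerivAt (fun v' => Ft (j v'))
        ((A (j v)).comp ((ContinuousLinearMap.fst ℝ ℝ ℝ).prod
          ((ContinuousLinearMap.snd ℝ ℝ ℝ).prod 0))) v :=
      (hFtq _ hv).comp v hjD
    have h2 : HasFDerivAt Φ
        (((A (j v)).comp ((ContinuousLinearMap.fst ℝ ℝ ℝ).prod
          ((ContinuousLinearMap.snd ℝ ℝ ℝ).prod 0))).prod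
          (ContinuousLinearMap.snd ℝ ℝ ℝ)) v :=
      h1.prodMk hasFDerivAt_snd
    have hLeq : (((A (j v)).comp ((ContinuousLinearMap.fst ℝ ℝ ℝ).prod
          ((ContinuousLinearMap.snd ℝ ℝ ℝ).prod 0))).prod
          (ContinuousLinearMap.snd ℝ ℝ ℝ)) =
        (↑(shearCLE (A (j v) (1,0,0)) (A (j v) (0,1,0)) hne) : (ℝ × ℝ) →L[ℝ] ℝ × ℝ) := by
      apply ContinuousLinearMap.ext
      intro w
      rw [shearCLE_coe_apply]
      have hval : A (j v) (w.1, w.2, 0) =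
          A (j v) (1,0,0) * w.1 + A (j v) (0,1,0) * w.2 := by
        rw [clm_apply_dir (A (j v)) (w.1, w.2, 0)]
        ring
      simp only [ContinuousLinearMap.prod_apply, ContinuousLinearMap.comp_apply,
        ContinuousLinearMap.coe_fst', ContinuousLinearMap.coe_snd',
        ContinuousLinearMap.zero_apply, Prod.mk.injEq]
      refine ⟨hval, ?_⟩
      trivial
    rw [hLeq] at h2
    exact h2
  have hΦD0 := hΦD (a,b) hp hα0
  set Φh : OpenPartialHomeomorph (ℝ × ℝ) (ℝ × ℝ) :=
    (hΦat (a,b) hp).toOpenPartialHomeomorph Φ hΦD0 (by simp) with hΦhdef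
  have hcoe : (Φh : ℝ × ℝ → ℝ × ℝ) = Φ :=
    ContDiffAt.toOpenPartialHomeomorph_coe _ _ _
  have hsrc : ((a,b) : ℝ × ℝ) ∈ Φh.source :=
    ContDiffAt.mem_toOpenPartialHomeomorph_source _ _ _
  have htgt : Φ (a,b) ∈ Φh.target :=
    ContDiffAt.image_mem_toOpenPartialHomeomorph_target _ _ _
  set ψ : ℝ × ℝ → ℝ × ℝ := ⇑Φh.symm with hψdef
  have hright : ∀ w ∈ Φh.target, Φ (ψ w) = w := by
    intro w hw
    have := Φh.right_inv hw
    rwa [hcoe] at this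
  have hleft : ∀ v ∈ Φh.source, ψ (Φ v) = v := by
    intro v hv
    have := Φh.left_inv hv
    rwa [hcoe] at this
  have hψ2 : ∀ w ∈ Φh.target, (ψ w).2 = w.2 := by
    intro w hw
    have h2 := congrArg (Prod.snd : ℝ × ℝ → ℝ) (hright w hw)
    exact h2
  -- ψ is smooth near points whose image lies in the good ball
  have hψat : ∀ w ∈ Φh.target, j (ψ w) ∈ Metric.ball ((a,b,c) : ℝ × ℝ × ℝ) r →
      ContDiffAt ℝ (⊤ : ℕ∞) ψ w := by
    intro w hw hjb
    have hU1 : j (ψ w) ∈ U := hrU _ hjb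
    have hne : A (j (ψ w)) (1,0,0) ≠ 0 := hrne _ hjb
    exact Φh.contDiffAt_symm hw (hΦD (ψ w) hU1 hne) (hΦat (ψ w) hU1)
  set T : Set (ℝ × ℝ) :=
    Φh.target ∩ ψ ⁻¹' (j ⁻¹' Metric.ball ((a,b,c) : ℝ × ℝ × ℝ) r) with hTdef
  have hTopen : IsOpen T := by
    apply ContinuousOn.isOpen_inter_preimage ?_ Φh.open_target
      (Metric.isOpen_ball.preimage hj.continuous)
    exact Φh.symm.continuousOn
  have hψT : ContDiffOn ℝ (⊤ : ℕ∞) ψ T := fun w hw => (hψat w hw.1 hw.2).contDiffWithinAt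
  have hTmem : Φ (a,b) ∈ T := by
    constructor
    · exact htgt
    · show j (ψ (Φ (a,b))) ∈ Metric.ball ((a,b,c) : ℝ × ℝ × ℝ) r
      rw [hleft (a,b) hsrc]
      exact Metric.mem_ball_self hr0
  -- choose δ and s
  obtain ⟨δ₀, hδ00, hδ0sub⟩ : ∃ δ > 0, Metric.ball (Φ (a,b)) δ ⊆ T :=
    Metric.isOpen_iff.1 hTopen _ hTmem
  set δ : ℝ := min δ₀ r with hδdef
  have hδ0 : 0 < δ := lt_min hδ00 hr0
  have hδsub : Metric.ball (Φ (a,b)) δ ⊆ T :=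
    (Metric.ball_subset_ball (min_le_left _ _)).trans hδ0sub
  have hδr : δ ≤ r := min_le_right _ _
  have hnhds : Φh.source ∩ Φ ⁻¹' Metric.ball (Φ (a,b)) δ ∩ Metric.ball ((a,b) : ℝ × ℝ) r ∈
      nhds ((a,b) : ℝ × ℝ) := by
    refine Filter.inter_mem (Filter.inter_mem ?_ ?_) ?_
    · exact Φh.open_source.mem_nhds hsrc
    · exact (hΦat (a,b) hp).continuousAt.preimage_mem_nhds
        (Metric.ball_mem_nhds _ hδ0)
    · exact Metric.ball_mem_nhds _ hr0
  obtain ⟨s, hs0, hssub⟩ := Metric.mem_nhds_iff.1 hnhds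
  set t : ℝ := min s r with htdef
  have ht0 : 0 < t := lt_min hs0 hr0
  have htr : t ≤ r := min_le_right _ _
  have hts : t ≤ s := min_le_left _ _
  -- the data
  set u₀ : ℝ := Ft (a,b,c) with hu₀def
  have hΦab : Φ (a,b) = (u₀, b) := rfl
  refine ⟨Metric.ball ((a,b,c) : ℝ × ℝ × ℝ) t, Metric.isOpen_ball,
    Metric.mem_ball_self ht0, ?_,
    Metric.ball ((a,b) : ℝ × ℝ) t, Metric.ball u₀ δ ×ˢ Metric.ball c t,
    (fun x y => F x y c), (fun u z => F (ψ (u, b)).1 b z),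
    Metric.isOpen_ball, Metric.isOpen_ball.prod Metric.isOpen_ball, ?_, ?_, ?_⟩
  · -- V ⊆ U
    exact fun q hq => hrU q (Metric.ball_subset_ball htr hq)
  · -- smoothness of f on W₁
    have hmaps : ∀ w ∈ Metric.ball ((a,b) : ℝ × ℝ) t, j w ∈ U := by
      intro w hw
      rw [← ball_prod_same] at hw
      apply hrU
      rw [hballmem]
      exact ⟨Metric.ball_subset_ball htr hw.1, Metric.ball_subset_ball htr hw.2,
        Metric.mem_ball_self hr0⟩
    exact hF.comp hj.contDiffOn hmaps
  · -- smoothness of g on W₂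
    have hW₂T : ∀ w : ℝ × ℝ, w ∈ Metric.ball u₀ δ ×ˢ Metric.ball c t →
        ((w.1, b) : ℝ × ℝ) ∈ T := by
      intro w hw
      apply hδsub
      rw [hΦab]
      exact mem_ball2.2 ⟨hw.1, Metric.mem_ball_self hδ0⟩
    have hm1 : ContDiffOn ℝ (⊤ : ℕ∞) (fun w : ℝ × ℝ => ψ (w.1, b))
        (Metric.ball u₀ δ ×ˢ Metric.ball c t) :=
      hψT.comp ((contDiff_fst.prodMk contDiff_const).contDiffOn) hW₂T
    have hm : ContDiffOn ℝ (⊤ : ℕ∞) (fun w : ℝ × ℝ => (((ψ (w.1, b)).1, b, w.2) : ℝ × ℝ × ℝ))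
        (Metric.ball u₀ δ ×ˢ Metric.ball c t) :=
      (contDiff_fst.comp_contDiffOn hm1).prodMk
        (contDiffOn_const.prodMk contDiff_snd.contDiffOn)
    have hmaps2 : ∀ w ∈ Metric.ball u₀ δ ×ˢ Metric.ball c t,
        (((ψ (w.1, b)).1, b, w.2) : ℝ × ℝ × ℝ) ∈ U := by
      intro w hw
      have hT' := hW₂T w hw
      have hjm : j (ψ (w.1, b)) ∈ Metric.ball ((a,b,c) : ℝ × ℝ × ℝ) r := hT'.2
      simp only [hjdef] at hjm
      rw [mem_ball3] at hjm
      apply hrU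
      rw [mem_ball3]
      exact ⟨hjm.1, Metric.mem_ball_self hr0, Metric.ball_subset_ball htr hw.2⟩
    exact hF.comp hm hmaps2
  · -- the main identity
    rintro ⟨x, y, z⟩ hq
    rw [mem_ball3] at hq
    obtain ⟨hx, hy, hz⟩ := hq
    set u : ℝ := F x y c with hudef
    have hxy2 : ((x,y) : ℝ × ℝ) ∈ Metric.ball ((a,b) : ℝ × ℝ) t := mem_ball2.2 ⟨hx, hy⟩
    have hxys := hssub (Metric.ball_subset_ball hts hxy2)
    have hxysrc : ((x,y) : ℝ × ℝ) ∈ Φh.source := hxys.1.1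
    have hΦxy : Φ (x,y) ∈ Metric.ball (Φ (a,b)) δ := hxys.1.2
    have hΦu : Φ (x,y) = (u, y) := rfl
    rw [hΦab, hΦu, mem_ball2] at hΦxy
    obtain ⟨hu, hyδ⟩ := hΦxy
    have hcont2 : Continuous (fun y'' : ℝ => ((u, y'') : ℝ × ℝ)) :=
      continuous_const.prodMk continuous_id
    refine ⟨hxy2, Set.mk_mem_prod hu hz, ?_⟩
    -- key derivative computation
    have key : ∀ y' ∈ Metric.ball b δ,
        HasDerivAt (fun y'' => Ft ((ψ (u, y'')).1, y'', z)) 0 y' := by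
      intro y' hy'
      have hw'T : ((u, y') : ℝ × ℝ) ∈ T := by
        apply hδsub
        rw [hΦab]
        exact mem_ball2.2 ⟨hu, hy'⟩
      obtain ⟨hw't, hw'j⟩ := hw'T
      have hjmem0 : j (ψ (u, y')) ∈ Metric.ball ((a,b,c) : ℝ × ℝ × ℝ) r := hw'j
      have hjmem := hjmem0
      simp only [hjdef] at hjmem
      have hψ2' : (ψ (u, y')).2 = y' := hψ2 _ hw't
      rw [hψ2', mem_ball3] at hjmem
      obtain ⟨hφr, hy'r, -⟩ := hjmem
      set φ1 : ℝ := (ψ (u, y')).1 with hφ1def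
      have hQzb : ((φ1, y', z) : ℝ × ℝ × ℝ) ∈ Metric.ball ((a,b,c) : ℝ × ℝ × ℝ) r :=
        mem_ball3.2 ⟨hφr, hy'r, Metric.ball_subset_ball htr hz⟩
      have hQcb : ((φ1, y', c) : ℝ × ℝ × ℝ) ∈ Metric.ball ((a,b,c) : ℝ × ℝ × ℝ) r :=
        mem_ball3.2 ⟨hφr, hy'r, Metric.mem_ball_self hr0⟩
      have hQzU : ((φ1, y', z) : ℝ × ℝ × ℝ) ∈ U := hrU _ hQzb
      have hQcU : ((φ1, y', c) : ℝ × ℝ × ℝ) ∈ U := hrU _ hQcb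
      -- derivative of the slice of ψ
      have hψD : HasFDerivAt ψ (fderiv ℝ ψ (u, y')) (u, y') :=
        ((hψat _ hw't hjmem0).differentiableAt (by simp)).hasFDerivAt
      have hcurve : HasDerivAt (fun y'' => ψ (u, y'')) (fderiv ℝ ψ (u, y') (0, 1)) y' :=
        slice2Y hψD
      set k : ℝ := (fderiv ℝ ψ (u, y') (0, 1)).1 with hkdef
      have hφd : HasDerivAt (fun y'' => (ψ (u, y'')).1) k y' :=
        by
          have h := (hasFDerivAt_fst : HasFDerivAt (Prod.fst : ℝ × ℝ → ℝ)
            (ContinuousLinearMap.fst ℝ ℝ ℝ) (ψ (u, y'))).comp_hasDerivAt y' hcurve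
          exact h
      -- the inverse identity kills the first-slot derivative at z = c
      have hG0 : HasDerivAt (fun y'' => Ft ((ψ (u, y'')).1, y'', c))
          (A (φ1, y', c) (k, 1, 0)) y' := sliceCurveY (hFtq _ hQcU) hφd
      have hevc : (fun y'' => Ft ((ψ (u, y'')).1, y'', c)) =ᶠ[nhds y'] (fun _ => u) := by
        filter_upwards [hcont2.continuousAt.preimage_mem_nhds
          (Φh.open_target.mem_nhds hw't)] with y'' hmem
        have h2'' : (ψ (u, y'')).2 = y'' := hψ2 _ hmem
        have hri := congrArg (Prod.fst : ℝ × ℝ → ℝ) (hright _ hmem)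
        calc Ft ((ψ (u, y'')).1, y'', c)
            = Ft ((ψ (u, y'')).1, (ψ (u, y'')).2, c) := by rw [h2'']
          _ = u := hri
      have hzero : A (φ1, y', c) (k, 1, 0) = 0 := by
        have h1 : HasDerivAt (fun _ : ℝ => u) (A (φ1, y', c) (k, 1, 0)) y' :=
          hG0.congr_of_eventuallyEq hevc.symm
        exact h1.unique (hasDerivAt_const y' u)
      have h1 : k * A (φ1, y', c) (1,0,0) + A (φ1, y', c) (0,1,0) = 0 := by
        rw [clm_apply_dir] at hzero
        simpa using hzero
      have hr' := hratio φ1 y' z hφr hy'r (Metric.ball_subset_ball htr hz)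
      have hQcne : A (φ1, y', c) (1,0,0) ≠ 0 := hrne _ hQcb
      have hsum : k * A (φ1, y', z) (1,0,0) + A (φ1, y', z) (0,1,0) = 0 := by
        have hmul : (k * A (φ1, y', z) (1,0,0) + A (φ1, y', z) (0,1,0)) *
            A (φ1, y', c) (1,0,0) = 0 := by
          linear_combination (A (φ1, y', z) (1,0,0)) * h1 + hr'
        exact (mul_eq_zero.mp hmul).resolve_right hQcne
      have hval : A (φ1, y', z) (k, 1, 0) = 0 := by
        rw [clm_apply_dir]
        simpa using hsum
      have hH : HasDerivAt (fun y'' => Ft ((ψ (u, y'')).1, y'', z))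
          (A (φ1, y', z) (k, 1, 0)) y' := sliceCurveY (hFtq _ hQzU) hφd
      rw [hval] at hH
      exact hH
    have hfinal := const_of_derivAt_zero (convex_ball b δ) Metric.isOpen_ball key hyδ
      (Metric.mem_ball_self hδ0)
    have hψxy : ψ (u, y) = ((x, y) : ℝ × ℝ) := hleft (x,y) hxysrc
    have hx1 : (ψ (u, y)).1 = x := by
      have h2 := congrArg (Prod.fst : ℝ × ℝ → ℝ) hψxy
      exact h2
    show F x y z = F (ψ (u, b)).1 b z
    rw [← hx1]
    exact hfinal
end

section
/- Let σ, f : ℝ → ℝ be twice continuously differentiable and let w₁, w₂, w₃, w₄, b₁, b₂ ∈ ℝ. Define F(x,y,z) = σ(w₃ f(w₁x + w₂y + b₁) + w₄z + b₂). Then at every point of ℝ³: F_{xy}F_x = F_{xx}F_y, F_{yy}F_x = F_{xy}F_y, and F_{yz}F_x = F_{xz}F_y. -/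
/-!
`F` depends on `(x, y)` only through the ridge variable `u = w₁ x + w₂ y`: writing
`F x y z = G u z`, every derivative of `F` is a derivative of `G` in `u` and `z`, times `w₁` for
each differentiation in `x` and `w₂` for each one in `y`. After cancelling the common factors
`G_uu G_u`, `G_uu G_u` and `G_uz G_u`, the three identities reduce to
`w₁ w₂ · w₁ = w₁² · w₂`, `w₂² · w₁ = w₁ w₂ · w₂` and `w₂ · w₁ = w₁ · w₂`.
-/

theorem deriv_comp_mul_add {𝕜 E : Type*} [NontriviallyNormedField 𝕜] [NormedAddCommGroup E]
    [NormedSpace 𝕜 E] (g : 𝕜 → E) (a c x : 𝕜) :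
    deriv (fun t => g (a * t + c)) x = a • deriv g (a * x + c) := by
  rw [← deriv_comp_add_const]
  exact deriv_comp_mul_left a (fun u => g (u + c)) x

section Ridge

variable {𝕜 : Type*} [NontriviallyNormedField 𝕜]

def HasRidgeProfile (a b : 𝕜) (F : 𝕜 → 𝕜 → 𝕜 → 𝕜) (G : 𝕜 → 𝕜 → 𝕜) : Prop :=
  ∀ x y z, F x y z = G (a * x + b * y) z

variable {a b : 𝕜} {F : 𝕜 → 𝕜 → 𝕜 → 𝕜} {G : 𝕜 → 𝕜 → 𝕜}

namespace HasRidgeProfile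

theorem deriv_fst (h : HasRidgeProfile a b F G) :
    HasRidgeProfile a b (fun x y z => deriv (fun x' => F x' y z) x)
      (fun u z => a * deriv (fun u' => G u' z) u) := by
  intro x y z
  simp only [h _ y z]
  exact deriv_comp_mul_add (G · z) a (b * y) x

theorem deriv_snd (h : HasRidgeProfile a b F G) :
    HasRidgeProfile a b (fun x y z => deriv (fun y' => F x y' z) y)
      (fun u z => b * deriv (fun u' => G u' z) u) := by
  intro x y z
  simp only [h x _ z, add_comm (a * x)]
  exact deriv_comp_mul_add (G · z) b (a * x) y

theorem deriv_thd (h : HasRidgeProfile a b F G) :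
    HasRidgeProfile a b (fun x y z => deriv (fun z' => F x y z') z)
      (fun u z => deriv (G u) z) := by
  intro x y z
  simp only [h x y]

theorem mixed_partials (h : HasRidgeProfile a b F G) (x y z : 𝕜) :
      (deriv (fun x' => deriv (fun y' => F x' y' z) y) x *
          deriv (fun x' => F x' y z) x =
        deriv (fun x' => deriv (fun x'' => F x'' y z) x') x *
          deriv (fun y' => F x y' z) y) ∧
      (deriv (fun y' => deriv (fun y'' => F x y'' z) y') y *
          deriv (fun x' => F x' y z) x =
        deriv (fun x' => deriv (fun y' => F x' y' z) y) x *
          deriv (fun y' => F x y' z) y) ∧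
      (deriv (fun y' => deriv (fun z' => F x y' z') z) y *
          deriv (fun x' => F x' y z) x =
        deriv (fun x' => deriv (fun z' => F x' y z') z) x *
          deriv (fun y' => F x y' z) y) := by
  have hx := h.deriv_fst x y z
  have hy := h.deriv_snd x y z
  have hxx := h.deriv_fst.deriv_fst x y z
  have hxy := h.deriv_snd.deriv_fst x y z
  have hyy := h.deriv_snd.deriv_snd x y z
  have hxz := h.deriv_thd.deriv_fst x y z
  have hyz := h.deriv_thd.deriv_snd x y z
  simp only [deriv_const_mul_field'] at hx hy hxx hxy hyy hxz hyz
  rw [hx, hy, hxx, hxy, hyy, hxz, hyz]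
  refine ⟨?_, ?_, ?_⟩ <;> ring

end HasRidgeProfile

end Ridge

theorem stmt3_general (σ f : ℝ → ℝ)
    (w₁ w₂ w₃ w₄ b₁ b₂ : ℝ)
    (F : ℝ → ℝ → ℝ → ℝ)
    (hF : ∀ x y z, F x y z = σ (w₃ * f (w₁ * x + w₂ * y + b₁) + w₄ * z + b₂)) :
    ∀ x y z : ℝ,
      (deriv (fun x' => deriv (fun y' => F x' y' z) y) x *
          deriv (fun x' => F x' y z) x =
        deriv (fun x' => deriv (fun x'' => F x'' y z) x') x *
          deriv (fun y' => F x y' z) y) ∧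
      (deriv (fun y' => deriv (fun y'' => F x y'' z) y') y *
          deriv (fun x' => F x' y z) x =
        deriv (fun x' => deriv (fun y' => F x' y' z) y) x *
          deriv (fun y' => F x y' z) y) ∧
      (deriv (fun y' => deriv (fun z' => F x y' z') z) y *
          deriv (fun x' => F x' y z) x =
        deriv (fun x' => deriv (fun z' => F x' y z') z) x *
          deriv (fun y' => F x y' z) y) :=
  HasRidgeProfile.mixed_partials (G := fun u z => σ (w₃ * f (u + b₁) + w₄ * z + b₂)) hF

/-- for `F(x,y,z) = σ(w₃ f(w₁x + w₂y + b₁) + w₄z + b₂)` with `σ, f` C²,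
the identities `F_{xy}F_x = F_{xx}F_y`, `F_{yy}F_x = F_{xy}F_y`, `F_{yz}F_x = F_{xz}F_y`
hold everywhere on ℝ³. -/
theorem stmt3 (σ f : ℝ → ℝ) (hσ : ContDiff ℝ 2 σ) (hf : ContDiff ℝ 2 f)
    (w₁ w₂ w₃ w₄ b₁ b₂ : ℝ)
    (F : ℝ → ℝ → ℝ → ℝ)
    (hF : ∀ x y z, F x y z = σ (w₃ * f (w₁ * x + w₂ * y + b₁) + w₄ * z + b₂)) :
    ∀ x y z : ℝ,
      (deriv (fun x' => deriv (fun y' => F x' y' z) y) x *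
          deriv (fun x' => F x' y z) x =
        deriv (fun x' => deriv (fun x'' => F x'' y z) x') x *
          deriv (fun y' => F x y' z) y) ∧
      (deriv (fun y' => deriv (fun y'' => F x y'' z) y') y *
          deriv (fun x' => F x' y z) x =
        deriv (fun x' => deriv (fun y' => F x' y' z) y) x *
          deriv (fun y' => F x y' z) y) ∧
      (deriv (fun y' => deriv (fun z' => F x y' z') z) y *
          deriv (fun x' => F x' y z) x =
        deriv (fun x' => deriv (fun z' => F x' y z') z) x *
          deriv (fun y' => F x y' z) y) :=
  stmt3_general σ f w₁ w₂ w₃ w₄ b₁ b₂ F hF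
end

section
/- Let n ≥ 1 and N ≥ 2 be integers and let r be an integer with r ≥ n(N−1). Then C(r+n, n) − 1 > N·(C(r+n−1, n−1) − 1), where C(a,b) denotes the binomial coefficient. -/
/-! Writing `n = k + 1`, the absorption identity `(m + 1) C(m, k) = (k + 1) C(m + 1, k + 1)`
with `m = r + k` shows `C(r + n, n) ≥ N · C(r + n - 1, n - 1)` as soon as `r + n ≥ N n`,
which is exactly `r ≥ n (N - 1)`. Subtracting, the `-1` on the right loses at most `1`
while the `-1` inside the product on the left loses `N ≥ 2`. -/

namespace Nat

theorem mul_choose_le_choose_succ_succ {N m k : ℕ} (h : N * (k + 1) ≤ m + 1) :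
    N * m.choose k ≤ (m + 1).choose (k + 1) := by
  refine Nat.le_of_mul_le_mul_right ?_ k.succ_pos
  calc N * m.choose k * (k + 1) = N * (k + 1) * m.choose k := by ring
    _ ≤ (m + 1) * m.choose k := Nat.mul_le_mul_right _ h
    _ = (m + 1).choose (k + 1) * (k + 1) := add_one_mul_choose_eq m k

theorem mul_sub_one_lt_sub_one_of_mul_le {N a b : ℕ} (hN : 2 ≤ N) (ha : 1 ≤ a)
    (h : N * a ≤ b) : N * (a - 1) < b - 1 := by
  have hNa : N ≤ N * a := Nat.le_mul_of_pos_right N ha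
  rw [Nat.mul_sub_one]
  omega

end Nat

/-- if `n ≥ 1`, `N ≥ 2`, and `r ≥ n(N−1)`, then
`C(r+n, n) − 1 > N·(C(r+n−1, n−1) − 1)`. -/
theorem stmt9 (n N r : ℕ) (hn : 1 ≤ n) (hN : 2 ≤ N) (hr : n * (N - 1) ≤ r) :
    N * ((r + n - 1).choose (n - 1) - 1) < (r + n).choose n - 1 := by
  obtain ⟨k, rfl⟩ : ∃ k, n = k + 1 := ⟨n - 1, by omega⟩
  have hrN : N * (k + 1) ≤ r + k + 1 := by
    have : (k + 1) * (N - 1) + (k + 1) = N * (k + 1) := by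
      rw [← Nat.mul_succ, Nat.mul_comm]; congr 1; omega
    omega
  rw [show r + (k + 1) - 1 = r + k by omega, Nat.add_sub_cancel, ← Nat.add_assoc]
  exact Nat.mul_sub_one_lt_sub_one_of_mul_le hN (Nat.choose_pos (by omega))
    (Nat.mul_choose_le_choose_succ_succ hrN)
end

section
/- There do not exist polynomials f(x,y), h(x,z), g(u,v) with real coefficients such that (x+y)z + y³z³ = g(f(x,y), h(x,z)) as polynomials in ℝ[x,y,z]. -/
/-!
Putting `z = 0` gives `g(f(x, y), h(x, 0)) = 0`. Every slice `f(a, ·)` is nonconstant, so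
`g(·, h(a, 0)) ≡ 0`; since some `g(u₀, ·)` is not identically zero, `h(x, 0)` is a constant `δ`.
Differentiating `g(f(x, y), h(x, z)) = (x + y) z + y³ z³` in `z` at `z = 0` gives
`x + y = ∂ᵥg(f(x, y), δ) · ∂_z h(x, 0)`. Hence `∂_z h(x, 0)` never vanishes and `∂ᵥg(·, δ)`
vanishes along `u = f(-t, t)`, which forces `f` to be constant on the antidiagonal `x + y = 0`.
Then `g(f(0, 0), h(0, z)) = 0` for all `z`, and as `h(0, ·)` is nonconstant,
`g(f(0, 0), ·) ≡ 0`; but `g(f(-1, 1), h(-1, 1)) = 1`.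
Each step uses that `p ∘ q = 0` forces `p = 0` or `q` constant.
-/

open MvPolynomial

namespace Polynomial

variable {R : Type*} [CommRing R] [IsDomain R] [Infinite R]

theorem eq_zero_or_eval_eq_of_eval_comp {p q : R[X]} (h : ∀ t, p.eval (q.eval t) = 0) :
    p = 0 ∨ ∀ s t, q.eval s = q.eval t := by
  have hcomp : p.comp q = 0 := Polynomial.funext fun t => by simpa using h t
  rcases comp_eq_zero_iff.mp hcomp with hp | ⟨-, hq⟩
  · exact .inl hp
  · exact .inr fun s t => by rw [hq]; simp

end Polynomial

section Slices

variable {R : Type*} [CommRing R]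

theorem map_aeval_vec2 {S T : Type*} [CommSemiring S] [CommSemiring T] [Algebra R S]
    [Algebra R T] (φ : S →ₐ[R] T) (A B : S) (p : MvPolynomial (Fin 2) R) :
    φ (aeval ![A, B] p) = aeval ![φ A, φ B] p := by
  rw [comp_aeval_apply]
  congr 2
  funext i; fin_cases i <;> rfl

theorem eval_aeval_vec2 (p : MvPolynomial (Fin 2) R) (A B : Polynomial R) (t : R) :
    (aeval ![A, B] p).eval t = aeval ![A.eval t, B.eval t] p := by
  simpa using map_aeval_vec2 (Polynomial.aeval t) A B p

theorem derivative_aeval_C_X (p : MvPolynomial (Fin 2) R) (a : R) :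
    Polynomial.derivative (aeval ![Polynomial.C a, Polynomial.X] p)
      = aeval ![Polynomial.C a, Polynomial.X] (pderiv 1 p) := by
  induction p using MvPolynomial.induction_on with
  | C r => simp
  | add p q hp hq => simp [hp, hq]
  | mul_X p i hp => fin_cases i <;> simp [hp, Polynomial.derivative_mul] <;> ring

end Slices

def Represents (f h g : MvPolynomial (Fin 2) ℝ) : Prop :=
  ∀ a b c : ℝ, (a + b) * c + b ^ 3 * c ^ 3 = aeval ![aeval ![a, b] f, aeval ![a, c] h] g

namespace Represents

variable {f h g : MvPolynomial (Fin 2) ℝ}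

theorem of_eq
    (E : ((X 0 + X 1) * X 2 + (X 1) ^ 3 * (X 2) ^ 3 : MvPolynomial (Fin 3) ℝ) =
      aeval ![aeval ![(X 0 : MvPolynomial (Fin 3) ℝ), X 1] f,
              aeval ![(X 0 : MvPolynomial (Fin 3) ℝ), X 2] h] g) :
    Represents f h g := by
  intro a b c
  have E' := congrArg (aeval ![a, b, c]) E
  rw [map_aeval_vec2, map_aeval_vec2, map_aeval_vec2] at E'
  simpa using E'

theorem not_forall_f_eq (H : Represents f h g) (a : ℝ) :
    ¬ ∀ s t : ℝ, aeval ![a, s] f = aeval ![a, t] f := fun hf => by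
  have h0 := H a 0 1
  have h1 := H a 1 1
  rw [hf 0 1] at h0
  linarith

theorem not_forall_h_eq (H : Represents f h g) :
    ¬ ∀ s t : ℝ, aeval ![0, s] h = aeval ![0, t] h := fun hh => by
  have h0 := H 0 1 0
  have h1 := H 0 1 1
  rw [hh 0 1] at h0
  linarith

theorem g_vanishes_at_h_zero (H : Represents f h g) (a u : ℝ) :
    aeval ![u, aeval ![a, 0] h] g = 0 := by
  have hvan : ∀ t, (aeval ![Polynomial.X, Polynomial.C (aeval ![a, 0] h)] g).eval
      ((aeval ![Polynomial.C a, Polynomial.X] f).eval t) = 0 := fun t => by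
    simpa [eval_aeval_vec2] using (H a t 0).symm
  rcases Polynomial.eq_zero_or_eval_eq_of_eval_comp hvan with hg | hf
  · simpa [eval_aeval_vec2] using congrArg (Polynomial.eval u) hg
  · exact absurd (by simpa [eval_aeval_vec2] using hf) (H.not_forall_f_eq a)

theorem h_zero_eq (H : Represents f h g) (a : ℝ) :
    aeval ![a, 0] h = aeval ![0, 0] h := by
  obtain ⟨u, hu⟩ : ∃ u : ℝ, aeval ![Polynomial.C u, Polynomial.X] g ≠ 0 := by
    by_contra! hg
    have hg1 := congrArg (Polynomial.eval (aeval ![1, 1] h)) (hg (aeval ![1, 0] f))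
    simp only [eval_aeval_vec2, Polynomial.eval_C, Polynomial.eval_X,
      Polynomial.eval_zero] at hg1
    linarith [H 1 0 1]
  have hvan : ∀ t, (aeval ![Polynomial.C u, Polynomial.X] g).eval
      ((aeval ![Polynomial.X, Polynomial.C 0] h).eval t) = 0 := fun t => by
    simpa [eval_aeval_vec2] using H.g_vanishes_at_h_zero t u
  rcases Polynomial.eq_zero_or_eval_eq_of_eval_comp hvan with hg | hh
  · exact absurd hg hu
  · simpa [eval_aeval_vec2] using hh a 0

theorem add_eq_mul_pderiv (H : Represents f h g) (a b : ℝ) :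
    a + b = aeval ![aeval ![a, b] f, aeval ![a, 0] h] (pderiv 1 g)
      * aeval ![a, 0] (pderiv 1 h) := by
  have hcomp : Polynomial.C (a + b) * Polynomial.X + Polynomial.C (b ^ 3) * Polynomial.X ^ 3
      = (aeval ![Polynomial.C (aeval ![a, b] f), Polynomial.X] g).comp
          (aeval ![Polynomial.C a, Polynomial.X] h) :=
    Polynomial.funext fun c => by simpa [eval_aeval_vec2] using H a b c
  have hder := congrArg (fun p => (Polynomial.derivative p).eval 0) hcomp
  simp only [Polynomial.derivative_comp, derivative_aeval_C_X] at hder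
  simpa [eval_aeval_vec2, mul_comm] using hder

theorem f_antidiagonal_eq (H : Represents f h g) (t : ℝ) :
    aeval ![-t, t] f = aeval ![(0 : ℝ), 0] f := by
  set P : Polynomial ℝ := aeval ![Polynomial.X, Polynomial.C (aeval ![(0 : ℝ), 0] h)] (pderiv 1 g)
  have hP : ∀ a b : ℝ, a + b = P.eval (aeval ![a, b] f) * aeval ![a, 0] (pderiv 1 h) := by
    intro a b
    simpa [P, eval_aeval_vec2, H.h_zero_eq a] using H.add_eq_mul_pderiv a b
  have hvan : ∀ s, P.eval ((aeval ![-Polynomial.X, Polynomial.X] f).eval s) = 0 := by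
    intro s
    have hk : aeval ![-s, 0] (pderiv 1 h) ≠ 0 := fun hk => by simpa [hk] using hP (-s) (1 + s)
    have h0 := hP (-s) s
    rw [neg_add_cancel, eq_comm, mul_eq_zero, or_iff_left hk] at h0
    simpa [eval_aeval_vec2] using h0
  rcases Polynomial.eq_zero_or_eval_eq_of_eval_comp hvan with hP0 | hf
  · simpa [hP0] using hP 1 0
  · simpa [eval_aeval_vec2] using hf t 0

theorem false (H : Represents f h g) : False := by
  have hvan : ∀ c : ℝ, (aeval ![Polynomial.C (aeval ![(0 : ℝ), 0] f), Polynomial.X] g).eval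
      ((aeval ![Polynomial.C 0, Polynomial.X] h).eval c) = 0 := fun c => by
    simpa [eval_aeval_vec2] using (H 0 0 c).symm
  rcases Polynomial.eq_zero_or_eval_eq_of_eval_comp hvan with hg | hh
  · have h1 := congrArg (Polynomial.eval (aeval ![(-1 : ℝ), 1] h)) hg
    simp only [eval_aeval_vec2, Polynomial.eval_C, Polynomial.eval_X, Polynomial.eval_zero,
      ← H.f_antidiagonal_eq 1] at h1
    linarith [H (-1) 1 1]
  · exact H.not_forall_h_eq (by simpa [eval_aeval_vec2] using hh)

end Represents

/-- there are no polynomials `f(x,y)`, `h(x,z)`, `g(u,v)` over ℝ with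
`(x+y)z + y³z³ = g(f(x,y), h(x,z))` in `ℝ[x,y,z]`. -/
theorem stmt14 :
    ¬ ∃ f h g : MvPolynomial (Fin 2) ℝ,
      ((X 0 + X 1) * X 2 + (X 1) ^ 3 * (X 2) ^ 3 : MvPolynomial (Fin 3) ℝ) =
        aeval ![aeval ![(X 0 : MvPolynomial (Fin 3) ℝ), X 1] f,
                aeval ![(X 0 : MvPolynomial (Fin 3) ℝ), X 2] h] g := by
  rintro ⟨f, h, g, E⟩
  exact (Represents.of_eq E).false
end
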